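/- Let d ≥ 3 be an integer. Then there exists a constant C = C(d) > 0 such that for every integer m ∈ ℤ, the function t ↦ |J_m(t)|^d is integrable on [1,∞) and ∫₁^∞ |J_m(t)|^d dt ≤ C. -/

import Mathlib

/-!
By the symmetry `k ↦ 2π - k`, `|J_m(t)| ≤ π⁻¹ |∫₀^π e^{iψ(k)} dk|` with the phase
`ψ(k) = -(mk + t sin k)`, which is convex on `[0, π]`. Integration by parts where `|ψ'| ≳ t`, and
van der Corput's second derivative test where `ψ'' = t sin k ≳ t`, give `|J_m(t)| ≲ t^{-1/2}`
unless `|m|/2 < t < 4|m|`, and `|J_m(t)| ≲ t^{-1/3}` for every `t ≥ 1`. For `d ≥ 3`, `|J_m|^d` is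
thus dominated by `t^{-3/2}` plus `t^{-1}` on an interval `[A, 8A]`, and both integrals are
bounded independently of `m`.
-/

open MeasureTheory

/-- The Bessel function `J_m(t) = (1/2π)∫₀^{2π} e^{-imk - i t sin k} dk` for `m ∈ ℤ`. -/
noncomputable def besselJ (m : ℤ) (t : ℝ) : ℂ :=
  (1 / (2 * Real.pi)) * ∫ k in (0:ℝ)..(2 * Real.pi),
    Complex.exp (-Complex.I * m * k - Complex.I * t * Real.sin k)

open Set intervalIntegral Complex

section Oscillatory

variable {ψ ψ' ψ'' : ℝ → ℝ} {a b r : ℝ}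

lemma intervalIntegrable_cexp_mul_I (hψ : Continuous ψ) (a b : ℝ) :
    IntervalIntegrable (fun x => cexp (ψ x * I)) volume a b :=
  (by fun_prop : Continuous fun x => cexp (ψ x * I)).intervalIntegrable a b

lemma norm_integral_cexp_mul_I_le_sub (ψ : ℝ → ℝ) (hab : a ≤ b) :
    ‖∫ x in a..b, cexp (ψ x * I)‖ ≤ b - a := by
  simpa [abs_of_nonneg (sub_nonneg.2 hab)] using
    norm_integral_le_of_norm_le_const (a := a) (b := b) (C := 1) (f := fun x => cexp (ψ x * I))
      (fun x _ => (norm_exp_ofReal_mul_I (ψ x)).le)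

/-- First derivative test: integrating by parts against `1 / ψ'` leaves a remainder bounded by
the total variation of `1 / ψ'`, which is at most `2 / r` because `ψ'` is monotone. -/
lemma norm_integral_cexp_mul_I_le_of_le_abs_deriv (hψ : ∀ x, HasDerivAt ψ (ψ' x) x)
    (hψ' : ∀ x, HasDerivAt ψ' (ψ'' x) x) (hψ'' : Continuous ψ'') (hab : a ≤ b) (hr : 0 < r)
    (h2 : ∀ x ∈ Icc a b, 0 ≤ ψ'' x) (h1 : ∀ x ∈ Icc a b, r ≤ |ψ' x|) :
    ‖∫ x in a..b, cexp (ψ x * I)‖ ≤ 4 / r := by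
  have hne : ∀ x ∈ uIcc a b, ψ' x ≠ 0 := fun x hx h0 => by
    have := h1 x (uIcc_of_le hab ▸ hx); rw [h0, abs_zero] at this; linarith
  have hψc : Continuous ψ := continuous_iff_continuousAt.2 fun x => (hψ x).continuousAt
  have hψ'c : Continuous ψ' := continuous_iff_continuousAt.2 fun x => (hψ' x).continuousAt
  have hq : ContinuousOn (fun x => ψ'' x / ψ' x ^ 2) (uIcc a b) :=
    hψ''.continuousOn.div (hψ'c.pow 2).continuousOn fun x hx => pow_ne_zero 2 (hne x hx)
  set g : ℝ → ℂ := fun x => cexp (ψ x * I) * ((ψ'' x / ψ' x ^ 2 : ℝ) * I)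
  have hg : ContinuousOn g (uIcc a b) :=
    (by fun_prop : Continuous fun x => cexp (ψ x * I)).continuousOn.mul
      ((continuous_ofReal.comp_continuousOn hq).mul continuousOn_const)
  have hF : ∀ x ∈ uIcc a b, HasDerivAt (fun y => cexp (ψ y * I) / (ψ' y * I))
      (cexp (ψ x * I) + g x) x := by
    intro x hx
    have hI : (ψ' x : ℂ) * I ≠ 0 := mul_ne_zero (ofReal_ne_zero.2 (hne x hx)) I_ne_zero
    refine ((((hψ x).ofReal_comp.mul_const I).cexp).div
      ((hψ' x).ofReal_comp.mul_const I) hI).congr_deriv ?_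
    have hψ'x : (ψ' x : ℂ) ≠ 0 := ofReal_ne_zero.2 (hne x hx)
    simp only [g]
    push_cast
    field_simp
    ring_nf
    rw [I_sq]
    ring
  have hibp : ∫ x in a..b, cexp (ψ x * I) = cexp (ψ b * I) / (ψ' b * I)
      - cexp (ψ a * I) / (ψ' a * I) - ∫ x in a..b, g x := by
    rw [← integral_eq_sub_of_hasDerivAt hF
      ((intervalIntegrable_cexp_mul_I hψc a b).add hg.intervalIntegrable),
      integral_add (intervalIntegrable_cexp_mul_I hψc a b) hg.intervalIntegrable]
    ring
  have hboundary : ∀ x ∈ Icc a b, ‖cexp (ψ x * I) / (ψ' x * I)‖ ≤ 1 / r := fun x hx => by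
    rw [norm_div, norm_exp_ofReal_mul_I, norm_mul, norm_I, mul_one, norm_real, Real.norm_eq_abs]
    exact one_div_le_one_div_of_le hr (h1 x hx)
  have hvar : ‖∫ x in a..b, g x‖ ≤ 2 / r := by
    have hnorm : ∀ x ∈ uIcc a b, ‖g x‖ = ψ'' x / ψ' x ^ 2 := fun x hx => by
      rw [norm_mul, norm_exp_ofReal_mul_I, one_mul, norm_mul, norm_I, mul_one, norm_real,
        Real.norm_eq_abs, abs_of_nonneg (div_nonneg (h2 x (uIcc_of_le hab ▸ hx)) (sq_nonneg _))]
    have hinv : ∀ x ∈ uIcc a b, HasDerivAt (fun y => -(ψ' y)⁻¹) (ψ'' x / ψ' x ^ 2) x :=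
      fun x hx => ((hψ' x).inv (hne x hx)).neg.congr_deriv (by ring)
    have hrec : ∀ x ∈ Icc a b, |(ψ' x)⁻¹| ≤ 1 / r := fun x hx => by
      rw [abs_inv, ← one_div]; exact one_div_le_one_div_of_le hr (h1 x hx)
    calc ‖∫ x in a..b, g x‖ ≤ ∫ x in a..b, ‖g x‖ := norm_integral_le_integral_norm hab
      _ = ∫ x in a..b, ψ'' x / ψ' x ^ 2 := integral_congr hnorm
      _ = (ψ' a)⁻¹ - (ψ' b)⁻¹ := by
        rw [integral_eq_sub_of_hasDerivAt hinv hq.intervalIntegrable]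
        ring
      _ ≤ |(ψ' a)⁻¹| + |(ψ' b)⁻¹| := by
        linarith [le_abs_self (ψ' a)⁻¹, neg_abs_le (ψ' b)⁻¹]
      _ ≤ 1 / r + 1 / r := add_le_add (hrec a (left_mem_Icc.2 hab)) (hrec b (right_mem_Icc.2 hab))
      _ = 2 / r := by ring
  calc ‖∫ x in a..b, cexp (ψ x * I)‖
      ≤ ‖cexp (ψ b * I) / (ψ' b * I)‖ + ‖cexp (ψ a * I) / (ψ' a * I)‖ + ‖∫ x in a..b, g x‖ := by
        rw [hibp]; exact (norm_sub_le _ _).trans (by gcongr; exact norm_sub_le _ _)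
    _ ≤ 1 / r + 1 / r + 2 / r :=
        add_le_add (add_le_add (hboundary b (right_mem_Icc.2 hab))
          (hboundary a (left_mem_Icc.2 hab))) hvar
    _ = 4 / r := by ring

lemma MonotoneOn.exists_abs_lt_on_Ioo {p : ℝ → ℝ} (hp : MonotoneOn p (Icc a b))
    (hpc : Continuous p) (hab : a ≤ b) (hr : 0 < r) :
    ∃ c d, a ≤ c ∧ c ≤ d ∧ d ≤ b ∧ (c = a ∨ p c ≤ -r) ∧ (d = b ∨ r ≤ p d) ∧
      ∀ x ∈ Ioo c d, |p x| < r := by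
  set S := insert a {x ∈ Icc a b | p x ≤ -r}
  set T := insert b {x ∈ Icc a b | r ≤ p x}
  have hSab : S ⊆ Icc a b := insert_subset (left_mem_Icc.2 hab) fun x hx => hx.1
  have hTab : T ⊆ Icc a b := insert_subset (right_mem_Icc.2 hab) fun x hx => hx.1
  have hSc : IsClosed S :=
    isClosed_singleton.union (isClosed_Icc.inter (isClosed_le hpc continuous_const))
  have hTc : IsClosed T :=
    isClosed_singleton.union (isClosed_Icc.inter (isClosed_le continuous_const hpc))
  have hSb : BddAbove S := bddAbove_Icc.mono hSab
  have hTb : BddBelow T := bddBelow_Icc.mono hTab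
  have hcS : sSup S ∈ S := hSc.csSup_mem (insert_nonempty _ _) hSb
  have hdT : sInf T ∈ T := hTc.csInf_mem (insert_nonempty _ _) hTb
  refine ⟨sSup S, sInf T, le_csSup hSb (mem_insert _ _), ?_, (hTab hdT).2,
    hcS.imp_right And.right, hdT.imp_right And.right, ?_⟩
  · rcases hcS with hc | hc
    · exact hc ▸ (hTab hdT).1
    rcases hdT with hd | hd
    · exact hd ▸ (hSab (Or.inr hc)).2
    by_contra! hlt
    linarith [hp hd.1 hc.1 hlt.le, hc.2, hd.2]
  · intro x hx
    have hxab : x ∈ Icc a b := ⟨(le_csSup hSb (mem_insert _ _)).trans hx.1.le,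
      hx.2.le.trans (hTab hdT).2⟩
    refine abs_lt.2 ⟨lt_of_not_ge fun hle => ?_, lt_of_not_ge fun hle => ?_⟩
    · exact (le_csSup hSb (Or.inr ⟨hxab, hle⟩)).not_gt hx.1
    · exact (csInf_le hTb (Or.inr ⟨hxab, hle⟩)).not_gt hx.2

/-- van der Corput's second derivative test: `ψ'` increases at rate at least `r ^ 2`, so it stays
in `(-r, r)` only on an interval of length at most `4 / r`, and on either side of it the first
derivative test applies. -/
lemma norm_integral_cexp_mul_I_le_of_sq_le_deriv2 (hψ : ∀ x, HasDerivAt ψ (ψ' x) x)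
    (hψ' : ∀ x, HasDerivAt ψ' (ψ'' x) x) (hψ'' : Continuous ψ'') (hab : a ≤ b) (hr : 0 < r)
    (h : ∀ x ∈ Icc a b, r ^ 2 ≤ ψ'' x) :
    ‖∫ x in a..b, cexp (ψ x * I)‖ ≤ 12 / r := by
  have hψc : Continuous ψ := continuous_iff_continuousAt.2 fun x => (hψ x).continuousAt
  have hψ'c : Continuous ψ' := continuous_iff_continuousAt.2 fun x => (hψ' x).continuousAt
  have hgrowth : ∀ x ∈ Icc a b, ∀ y ∈ Icc a b, x ≤ y → r ^ 2 * (y - x) ≤ ψ' y - ψ' x :=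
    (convex_Icc a b).mul_sub_le_image_sub_of_le_deriv hψ'c.continuousOn
      (fun x _ => (hψ' x).differentiableAt.differentiableWithinAt)
      (fun x hx => (hψ' x).deriv ▸ h x (interior_subset hx))
  have hmono : MonotoneOn ψ' (Icc a b) := fun x hx y hy hxy =>
    sub_nonneg.1 ((mul_nonneg (sq_nonneg r) (sub_nonneg.2 hxy)).trans (hgrowth x hx y hy hxy))
  have hconvex : ∀ x ∈ Icc a b, 0 ≤ ψ'' x := fun x hx => (sq_nonneg r).trans (h x hx)
  obtain ⟨c, d, hac, hcd, hdb, hc, hd, hmid⟩ := hmono.exists_abs_lt_on_Ioo hψ'c hab hr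
  have hleft : ‖∫ x in a..c, cexp (ψ x * I)‖ ≤ 4 / r := by
    rcases hc with rfl | hc
    · rw [integral_same, norm_zero]; positivity
    refine norm_integral_cexp_mul_I_le_of_le_abs_deriv hψ hψ' hψ'' hac hr
      (fun x hx => hconvex x ⟨hx.1, hx.2.trans (hcd.trans hdb)⟩) fun x hx => ?_
    have := hmono ⟨hx.1, hx.2.trans (hcd.trans hdb)⟩ ⟨hac, hcd.trans hdb⟩ hx.2
    exact le_abs.2 (Or.inr (by linarith))
  have hright : ‖∫ x in d..b, cexp (ψ x * I)‖ ≤ 4 / r := by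
    rcases hd with rfl | hd
    · rw [integral_same, norm_zero]; positivity
    refine norm_integral_cexp_mul_I_le_of_le_abs_deriv hψ hψ' hψ'' hdb hr
      (fun x hx => hconvex x ⟨hac.trans (hcd.trans hx.1), hx.2⟩) fun x hx => ?_
    have := hmono ⟨hac.trans hcd, hdb⟩ ⟨hac.trans (hcd.trans hx.1), hx.2⟩ hx.1
    exact le_abs.2 (Or.inl (by linarith))
  have hlength : d - c ≤ 4 / r := by
    rcases hcd.eq_or_lt with rfl | hlt
    · rw [sub_self]; positivity
    have hx : c + (d - c) / 4 ∈ Ioo c d := ⟨by linarith, by linarith⟩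
    have hy : d - (d - c) / 4 ∈ Ioo c d := ⟨by linarith, by linarith⟩
    have hIcc : Ioo c d ⊆ Icc a b := fun z hz => ⟨hac.trans hz.1.le, hz.2.le.trans hdb⟩
    have hgap := hgrowth _ (hIcc hx) _ (hIcc hy) (by linarith)
    have hxr := abs_lt.1 (hmid _ hx)
    have hyr := abs_lt.1 (hmid _ hy)
    rw [le_div_iff₀ hr]
    nlinarith
  have hint := intervalIntegrable_cexp_mul_I hψc
  calc ‖∫ x in a..b, cexp (ψ x * I)‖
      = ‖(∫ x in a..c, cexp (ψ x * I)) + (∫ x in c..d, cexp (ψ x * I))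
          + ∫ x in d..b, cexp (ψ x * I)‖ := by
        rw [integral_add_adjacent_intervals (hint a c) (hint c d),
          integral_add_adjacent_intervals (hint a d) (hint d b)]
    _ ≤ 4 / r + (d - c) + 4 / r :=
        (norm_add₃_le).trans (add_le_add (add_le_add hleft
          (norm_integral_cexp_mul_I_le_sub ψ hcd)) hright)
    _ ≤ 4 / r + 4 / r + 4 / r := by gcongr
    _ = 12 / r := by ring

end Oscillatory

section Bessel

open scoped Real ComplexConjugate

variable {m t δ r u v : ℝ}

noncomputable def besselPhase (m t k : ℝ) : ℝ := -(m * k + t * Real.sin k)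

lemma hasDerivAt_besselPhase (m t k : ℝ) :
    HasDerivAt (besselPhase m t) (-(m + t * Real.cos k)) k :=
  (((hasDerivAt_id k).const_mul m).add ((Real.hasDerivAt_sin k).const_mul t)).neg.congr_deriv
    (by ring)

lemma hasDerivAt_neg_add_mul_cos (m t k : ℝ) :
    HasDerivAt (fun k => -(m + t * Real.cos k)) (t * Real.sin k) k :=
  ((Real.hasDerivAt_cos k).const_mul t).const_add m |>.neg.congr_deriv (by ring)

lemma continuous_besselPhase (m t : ℝ) : Continuous (besselPhase m t) :=
  continuous_iff_continuousAt.2 fun k => (hasDerivAt_besselPhase m t k).continuousAt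

lemma continuous_besselJ (m : ℤ) : Continuous (besselJ m) := by
  unfold besselJ
  fun_prop

lemma cexp_besselPhase_two_pi_sub (m : ℤ) (t k : ℝ) :
    cexp (besselPhase m t (2 * π - k) * I) = conj (cexp (besselPhase m t k * I)) := by
  rw [← exp_conj, map_mul, conj_ofReal, conj_I]
  have : (besselPhase m t (2 * π - k) : ℂ) * I
      = besselPhase m t k * -I + (-m : ℤ) * (2 * π * I) := by
    simp only [besselPhase, Real.sin_two_pi_sub]
    push_cast
    ring
  rw [this, exp_add, exp_int_mul_two_pi_mul_I, mul_one]

/-- The symmetry `k ↦ 2π - k` conjugates the integrand, so half a period suffices. -/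
lemma norm_besselJ_le (m : ℤ) (t : ℝ) :
    ‖besselJ m t‖ ≤ ‖∫ k in (0)..π, cexp (besselPhase m t k * I)‖ / π := by
  set z := ∫ k in (0)..π, cexp (besselPhase m t k * I)
  have hint := intervalIntegrable_cexp_mul_I (continuous_besselPhase m t)
  have hJ : besselJ m t = (1 / (2 * π)) * (z + conj z) := by
    have hsecond : ∫ k in π..2 * π, cexp (besselPhase m t k * I) = conj z := by
      simp_rw [z, ← intervalIntegral.intervalIntegral_conj, ← cexp_besselPhase_two_pi_sub,
        integral_comp_sub_left (fun k => cexp (besselPhase m t k * I)) (2 * π)]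
      norm_num [two_mul]
    rw [besselJ, ← hsecond, integral_add_adjacent_intervals (hint 0 π) (hint π (2 * π))]
    congr 2
    ext k
    simp only [besselPhase]
    push_cast
    ring_nf
  rw [hJ, norm_mul, norm_div, norm_one, norm_mul, RCLike.norm_ofNat, norm_real,
    Real.norm_of_nonneg Real.pi_pos.le]
  calc 1 / (2 * π) * ‖z + conj z‖ ≤ 1 / (2 * π) * (‖z‖ + ‖z‖) := by
        gcongr; exact (norm_add_le _ _).trans_eq (by rw [RCLike.norm_conj])
    _ = ‖z‖ / π := by field_simp; ring

lemma sin_le_sin_of_mem_Icc_pi_sub (hδ0 : 0 ≤ δ) (hδ : δ ≤ π / 2) {k : ℝ} (hk : k ∈ Icc δ (π - δ)) :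
    Real.sin δ ≤ Real.sin k := by
  rcases le_total k (π / 2) with hk2 | hk2
  · exact Real.sin_le_sin_of_le_of_le_pi_div_two (by linarith [Real.pi_pos]) hk2 hk.1
  · rw [← Real.sin_pi_sub k]
    exact Real.sin_le_sin_of_le_of_le_pi_div_two (by linarith [Real.pi_pos]) (by linarith)
      (by linarith [hk.2])

lemma norm_integral_besselPhase_le_of_le_abs (ht : 0 ≤ t) (hu : 0 ≤ u) (huv : u ≤ v)
    (hv : v ≤ π) (hr : 0 < r) (h : ∀ k ∈ Icc u v, r ≤ |m + t * Real.cos k|) :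
    ‖∫ k in u..v, cexp (besselPhase m t k * I)‖ ≤ 4 / r :=
  norm_integral_cexp_mul_I_le_of_le_abs_deriv (hasDerivAt_besselPhase m t)
    (hasDerivAt_neg_add_mul_cos m t) (continuous_const.mul Real.continuous_sin) huv hr
    (fun k hk => mul_nonneg ht (Real.sin_nonneg_of_nonneg_of_le_pi (hu.trans hk.1) (hk.2.trans hv)))
    (fun k hk => by rw [abs_neg]; exact h k hk)

lemma norm_integral_besselPhase_le (hδ0 : 0 ≤ δ) (hδ : δ ≤ π / 2) (hr : 0 < r)
    (hrt : r ^ 2 ≤ t * Real.sin δ) :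
    ‖∫ k in (0)..π, cexp (besselPhase m t k * I)‖ ≤
      ‖∫ k in (0)..δ, cexp (besselPhase m t k * I)‖ + 12 / r
        + ‖∫ k in (π - δ)..π, cexp (besselPhase m t k * I)‖ := by
  have ht : 0 ≤ t := (pos_of_mul_pos_left ((pow_pos hr 2).trans_le hrt)
    (Real.sin_nonneg_of_nonneg_of_le_pi hδ0 (by linarith [Real.pi_pos]))).le
  have hmid := norm_integral_cexp_mul_I_le_of_sq_le_deriv2 (hasDerivAt_besselPhase m t)
    (hasDerivAt_neg_add_mul_cos m t) (continuous_const.mul Real.continuous_sin)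
    (by linarith : δ ≤ π - δ) hr
    (fun k hk => hrt.trans (mul_le_mul_of_nonneg_left (sin_le_sin_of_mem_Icc_pi_sub hδ0 hδ hk) ht))
  have hint := intervalIntegrable_cexp_mul_I (continuous_besselPhase m t)
  rw [← integral_add_adjacent_intervals (hint 0 δ) (hint δ π),
    ← integral_add_adjacent_intervals (hint δ (π - δ)) (hint (π - δ) π), ← add_assoc]
  exact norm_add₃_le.trans (by gcongr)

lemma norm_besselJ_le_of_two_mul_le_abs (m : ℤ) (ht : 0 < t) (h : 2 * t ≤ |(m : ℝ)|) :
    ‖besselJ m t‖ ≤ 2 / t := by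
  have hfar : ∀ k ∈ Icc 0 π, t ≤ |m + t * Real.cos k| := fun k _ => by
    have h1 : |t * Real.cos k| ≤ t := by
      rw [abs_mul, abs_of_pos ht]; exact mul_le_of_le_one_right ht.le (Real.abs_cos_le_one k)
    have h2 := abs_sub_abs_le_abs_sub (m : ℝ) (-(t * Real.cos k))
    rw [abs_neg, sub_neg_eq_add] at h2
    linarith
  calc ‖besselJ m t‖ ≤ ‖∫ k in (0)..π, cexp (besselPhase m t k * I)‖ / π := norm_besselJ_le m t
    _ ≤ 4 / t / π := by
        gcongr
        exact norm_integral_besselPhase_le_of_le_abs ht.le le_rfl Real.pi_pos.le le_rfl ht hfar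
    _ ≤ 2 / t := by
        rw [div_div, div_le_div_iff₀ (by positivity) ht]; nlinarith [Real.pi_gt_three]

lemma norm_besselJ_le_rpow (m : ℤ) (ht : 1 ≤ t) : ‖besselJ m t‖ ≤ 9 * t ^ (-(1 / 3 : ℝ)) := by
  -- `δ` balances the trivial bound `δ` near the zeros `0, π` of `ψ''` against the van der Corput
  -- bound `(t δ)^(-1/2)` away from them
  set δ := t ^ (-(1 / 3 : ℝ))
  have ht0 : 0 < t := by linarith
  have hδ0 : 0 < δ := Real.rpow_pos_of_pos ht0 _
  have hδ1 : δ ≤ 1 := Real.rpow_le_one_of_one_le_of_nonpos ht (by norm_num)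
  have hδ3 : t * δ ^ 3 = 1 := by
    rw [← Real.rpow_natCast, ← Real.rpow_mul ht0.le]
    norm_num [Real.rpow_neg_one, ht0.ne']
  have hπ := Real.pi_gt_three
  have hsin : δ / 2 ≤ Real.sin δ := by
    have : 1 / 2 ≤ 2 / π := by rw [le_div_iff₀ Real.pi_pos]; linarith [Real.pi_le_four]
    nlinarith [Real.mul_le_sin hδ0.le (by linarith : δ ≤ π / 2)]
  have hr : (1 / (2 * δ)) ^ 2 ≤ t * Real.sin δ :=
    calc (1 / (2 * δ)) ^ 2 ≤ t * (δ / 2) := by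
          rw [div_pow, div_le_iff₀ (by positivity)]; nlinarith
      _ ≤ t * Real.sin δ := by gcongr
  have hsplit := norm_integral_besselPhase_le (m := m) hδ0.le (by linarith) (by positivity) hr
  have hend1 := norm_integral_cexp_mul_I_le_sub (besselPhase m t) hδ0.le
  have hend2 := norm_integral_cexp_mul_I_le_sub (besselPhase m t) (by linarith : π - δ ≤ π)
  calc ‖besselJ m t‖ ≤ ‖∫ k in (0)..π, cexp (besselPhase m t k * I)‖ / π := norm_besselJ_le m t
    _ ≤ (δ + 24 * δ + δ) / π := by
        gcongr
        refine hsplit.trans (add_le_add (add_le_add (hend1.trans_eq (sub_zero δ)) ?_)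
          (hend2.trans_eq (by ring)))
        exact le_of_eq (by field_simp; ring)
    _ ≤ 9 * δ := by rw [div_le_iff₀ Real.pi_pos]; nlinarith

lemma norm_besselJ_le_of_four_mul_abs_le (m : ℤ) (ht : 1 ≤ t) (h : 4 * |(m : ℝ)| ≤ t) :
    ‖besselJ m t‖ ≤ 19 * t ^ (-(1 / 2 : ℝ)) := by
  have ht0 : 0 < t := by linarith
  set s := √t
  have hs : 1 ≤ s := Real.one_le_sqrt.2 ht
  have hst : s ^ 2 = t := Real.sq_sqrt ht0.le
  have hπ := Real.pi_gt_three
  have hfar : ∀ k, 1 / 2 ≤ |Real.cos k| → t / 4 ≤ |m + t * Real.cos k| := fun k hk => by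
    have h1 : t / 2 ≤ |t * Real.cos k| := by rw [abs_mul, abs_of_pos ht0]; nlinarith
    have h2 := abs_sub_abs_le_abs_sub (t * Real.cos k) (-m)
    rw [abs_neg, sub_neg_eq_add, add_comm] at h2
    linarith
  have hcos : ∀ k ∈ Icc 0 (π / 3), 1 / 2 ≤ Real.cos k := fun k hk =>
    Real.cos_pi_div_three ▸ Real.cos_le_cos_of_nonneg_of_le_pi hk.1 (by linarith) hk.2
  have hleft : ‖∫ k in (0)..(π / 3), cexp (besselPhase m t k * I)‖ ≤ 16 / t :=
    (norm_integral_besselPhase_le_of_le_abs ht0.le le_rfl (by positivity) (by linarith)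
      (by positivity) fun k hk => hfar k ((hcos k hk).trans (le_abs_self _))).trans_eq
      (by field_simp; norm_num)
  have hright : ‖∫ k in (π - π / 3)..π, cexp (besselPhase m t k * I)‖ ≤ 16 / t :=
    (norm_integral_besselPhase_le_of_le_abs ht0.le (by linarith) (by linarith) le_rfl
      (by positivity) fun k hk => hfar k <| by
        rw [← abs_neg, ← Real.cos_pi_sub]
        exact (hcos (π - k) ⟨by linarith [hk.2], by linarith [hk.1]⟩).trans (le_abs_self _))
      |>.trans_eq (by field_simp; norm_num)
  have hsin : (s / 2) ^ 2 ≤ t * Real.sin (π / 3) := by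
    have := Real.mul_le_sin (by positivity : 0 ≤ π / 3) (by linarith)
    rw [show 2 / π * (π / 3) = 2 / 3 by field_simp] at this
    nlinarith
  have hsplit := norm_integral_besselPhase_le (m := m) (by positivity) (by linarith)
    (by positivity) hsin
  have hrpow : t ^ (-(1 / 2 : ℝ)) = 1 / s := by
    rw [Real.rpow_neg ht0.le, ← Real.sqrt_eq_rpow, one_div]
  have hts : 16 / t ≤ 16 / s := by gcongr; nlinarith
  calc ‖besselJ m t‖ ≤ ‖∫ k in (0)..π, cexp (besselPhase m t k * I)‖ / π := norm_besselJ_le m t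
    _ ≤ (16 / s + 24 / s + 16 / s) / π := by
        gcongr
        refine hsplit.trans (add_le_add (add_le_add (hleft.trans hts) (le_of_eq ?_))
          (hright.trans hts))
        field_simp; ring
    _ ≤ 19 * t ^ (-(1 / 2 : ℝ)) := by
        rw [hrpow, div_le_iff₀ Real.pi_pos]
        field_simp
        nlinarith

end Bessel

lemma pow_le_pow_mul_rpow_of_le {x C α t : ℝ} {d : ℕ} (hx : 0 ≤ x) (ht : 1 ≤ t) (hα : 0 ≤ α)
    (hd : 3 ≤ d) (h : x ≤ C * t ^ (-α)) : x ^ d ≤ C ^ d * t ^ (-(3 * α)) := by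
  have hpos : 0 < t ^ (-α) := Real.rpow_pos_of_pos (by linarith) _
  have hC : 0 ≤ C := nonneg_of_mul_nonneg_left (hx.trans h) hpos
  calc x ^ d ≤ (C * t ^ (-α)) ^ d := pow_le_pow_left₀ hx h d
    _ = C ^ d * (t ^ (-α)) ^ d := mul_pow _ _ _
    _ ≤ C ^ d * (t ^ (-α)) ^ 3 := mul_le_mul_of_nonneg_left (pow_le_pow_of_le_one hpos.le
        (Real.rpow_le_one_of_one_le_of_nonpos ht (by linarith)) hd) (pow_nonneg hC d)
    _ = C ^ d * t ^ (-(3 * α)) := by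
        rw [← Real.rpow_natCast (t ^ (-α)) 3, ← Real.rpow_mul (by linarith)]
        ring_nf

/-- `A` stands for `max 1 (|m| / 2)`: on `[A, 8A]`, where `t` is comparable to `|m|`, only the
uniform decay `t^(-1/3)` is available, but there `∫ dt / t` is bounded independently of `m`. -/
noncomputable def besselMajorant (d : ℕ) (A t : ℝ) : ℝ :=
  19 ^ d * t ^ (-(3 / 2 : ℝ)) + (Icc A (8 * A)).indicator (fun _ => 9 ^ d / A) t

lemma norm_besselJ_pow_le_besselMajorant {d : ℕ} (hd : 3 ≤ d) (m : ℤ) {t : ℝ} (ht : 1 ≤ t) :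
    ‖besselJ m t‖ ^ d ≤ besselMajorant d (max 1 (|(m : ℝ)| / 2)) t := by
  set A := max 1 (|(m : ℝ)| / 2)
  have ht0 : 0 < t := by linarith
  by_cases hmid : t ∈ Icc A (8 * A)
  · have hpow := pow_le_pow_mul_rpow_of_le (norm_nonneg _) ht (by norm_num) hd
      (norm_besselJ_le_rpow m ht)
    rw [show -(3 * (1 / 3 : ℝ)) = -1 by norm_num, Real.rpow_neg_one] at hpow
    rw [besselMajorant, indicator_of_mem hmid]
    have : (9 : ℝ) ^ d * t⁻¹ ≤ 9 ^ d / A := by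
      rw [← div_eq_mul_inv]; gcongr; exact hmid.1
    have : 0 ≤ (19 : ℝ) ^ d * t ^ (-(3 / 2 : ℝ)) := by positivity
    linarith
  have hdecay : ‖besselJ m t‖ ≤ 19 * t ^ (-(1 / 2 : ℝ)) := by
    rcases not_and_or.1 hmid with hlow | hhigh
    · have h2t : 2 * t ≤ |(m : ℝ)| := by
        have := lt_max_iff.1 (not_le.1 hlow); rcases this with h1 | h1 <;> linarith
      calc ‖besselJ m t‖ ≤ 2 / t := norm_besselJ_le_of_two_mul_le_abs m ht0 h2t
        _ = 2 * t ^ (-1 : ℝ) := by rw [Real.rpow_neg_one, div_eq_mul_inv]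
        _ ≤ 19 * t ^ (-(1 / 2 : ℝ)) := mul_le_mul (by norm_num)
            (Real.rpow_le_rpow_of_exponent_le ht (by norm_num)) (by positivity) (by norm_num)
    · exact norm_besselJ_le_of_four_mul_abs_le m ht
        (by linarith [not_le.1 hhigh, le_max_right 1 (|(m : ℝ)| / 2)])
  have hpow := pow_le_pow_mul_rpow_of_le (norm_nonneg _) ht (by norm_num) hd hdecay
  rw [besselMajorant, indicator_of_notMem hmid, add_zero]
  exact hpow.trans_eq (by norm_num)

lemma integrableOn_besselMajorant_and_integral_eq (d : ℕ) {A : ℝ} (hA : 1 ≤ A) :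
    IntegrableOn (besselMajorant d A) (Ici 1) ∧
      ∫ t in Ici 1, besselMajorant d A t = 2 * 19 ^ d + 7 * 9 ^ d := by
  have hdecay : IntegrableOn (fun t : ℝ => (19 : ℝ) ^ d * t ^ (-(3 / 2 : ℝ))) (Ici 1) := by
    rw [integrableOn_Ici_iff_integrableOn_Ioi]
    exact (integrableOn_Ioi_rpow_of_lt (by norm_num) one_pos).const_mul _
  have hbump : IntegrableOn ((Icc A (8 * A)).indicator fun _ => (9 : ℝ) ^ d / A) (Ici 1) :=
    ((integrableOn_const measure_Icc_lt_top.ne).integrable_indicator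
      measurableSet_Icc).integrableOn
  refine ⟨hdecay.add hbump, ?_⟩
  have hdecay_eq : ∫ t in Ici (1 : ℝ), (19 : ℝ) ^ d * t ^ (-(3 / 2 : ℝ)) = 2 * 19 ^ d := by
    rw [integral_Ici_eq_integral_Ioi, MeasureTheory.integral_const_mul,
      integral_Ioi_rpow_of_lt (by norm_num) one_pos, Real.one_rpow]
    norm_num
    ring
  have hbump_eq : ∫ t in Ici (1 : ℝ), (Icc A (8 * A)).indicator (fun _ => (9 : ℝ) ^ d / A) t
      = 7 * 9 ^ d := by
    rw [setIntegral_indicator measurableSet_Icc,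
      inter_eq_right.2 (Icc_subset_Ici_self.trans (Ici_subset_Ici.2 hA)), setIntegral_const,
      Real.volume_real_Icc_of_le (by linarith), smul_eq_mul]
    field_simp
    ring
  rw [← hdecay_eq, ← hbump_eq, ← MeasureTheory.integral_add hdecay hbump]
  rfl

/-- For every integer `d ≥ 3` there is `C = C(d) > 0` such that for every
`m ∈ ℤ` the function `t ↦ |J_m(t)|^d` is integrable on `[1,∞)` with
`∫₁^∞ |J_m(t)|^d dt ≤ C`. -/
theorem statement3 (d : ℕ) (hd : 3 ≤ d) :
    ∃ C : ℝ, 0 < C ∧ ∀ m : ℤ,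
      IntegrableOn (fun t : ℝ => ‖besselJ m t‖ ^ d) (Set.Ici (1:ℝ)) ∧
      ∫ t in Set.Ici (1:ℝ), ‖besselJ m t‖ ^ d ≤ C := by
  refine ⟨2 * 19 ^ d + 7 * 9 ^ d, by positivity, fun m => ?_⟩
  have hA : (1 : ℝ) ≤ max 1 (|(m : ℝ)| / 2) := le_max_left _ _
  obtain ⟨hg, hg_eq⟩ := integrableOn_besselMajorant_and_integral_eq d hA
  have hle : ∀ t ∈ Ici (1 : ℝ), ‖‖besselJ m t‖ ^ d‖ ≤ besselMajorant d (max 1 (|(m : ℝ)| / 2)) t :=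
    fun t ht => (Real.norm_of_nonneg (by positivity)).trans_le
      (norm_besselJ_pow_le_besselMajorant hd m ht)
  have hint : IntegrableOn (fun t : ℝ => ‖besselJ m t‖ ^ d) (Ici 1) :=
    hg.mono' ((continuous_besselJ m).norm.pow d).aestronglyMeasurable
      ((ae_restrict_iff' measurableSet_Ici).2 (ae_of_all _ hle))
  refine ⟨hint, ?_⟩
  calc ∫ t in Ici 1, ‖besselJ m t‖ ^ d
      ≤ ∫ t in Ici 1, besselMajorant d (max 1 (|(m : ℝ)| / 2)) t :=
        setIntegral_mono_on hint hg measurableSet_Ici fun t ht =>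
          (Real.le_norm_self _).trans (hle t ht)
    _ = 2 * 19 ^ d + 7 * 9 ^ d := hg_eq
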